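/- arXiv:1908.04497 — 3 statements merged into one kernel-verified Lean document; each statement's English description precedes it below -/
import Mathlib

section
/- Structure Theorem of the Laplacian Kernel (STLK): Let N = (S, C, R) be a chemical reaction network with terminal strong linkage classes C^1, C^2, ..., C^t. Then for every positive rate vector k ∈ ℝ^R_{>0}, the kernel of the Laplacian map A_k has a basis b^1, b^2, ..., b^t such that supp(b^i) = C^i for all i = 1, 2, ..., t. In particular, dim Ker A_k = t and every element of Ker A_k has its support contained in the set of terminal complexes. -/
open scoped BigOperators Classical

/-- A chemical reaction network (CRN) on a finite species set `S`:
complexes are non-negative vectors in `ℝ^S`, reactions are pairs of complexes,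
no reaction is a self-loop, and every complex occurs in some reaction. -/
structure CRN (S : Type*) [Fintype S] where
  complexes : Finset (S → ℝ)
  reactions : Finset ((S → ℝ) × (S → ℝ))
  complexes_nonneg : ∀ y ∈ complexes, ∀ i, 0 ≤ y i
  mem_source : ∀ r ∈ reactions, r.1 ∈ complexes
  mem_target : ∀ r ∈ reactions, r.2 ∈ complexes
  ne_of_mem : ∀ r ∈ reactions, r.1 ≠ r.2
  cover : ∀ y ∈ complexes, ∃ y', (y, y') ∈ reactions ∨ (y', y) ∈ reactions

namespace CRN

variable {S : Type*} [Fintype S] (N : CRN S)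

/-- One-step reaction relation on complexes. -/
def step (y y' : S → ℝ) : Prop := (y, y') ∈ N.reactions

/-- Reachability along directed reactions. -/
def reach : (S → ℝ) → (S → ℝ) → Prop := Relation.ReflTransGen N.step

/-- A complex is terminal iff it belongs to a terminal strong linkage class,
i.e. everything reachable from it can reach it back. -/
def IsTerminal (y : S → ℝ) : Prop :=
  y ∈ N.complexes ∧ ∀ y', N.reach y y' → N.reach y' y

/-- A nonterminal complex. -/
def Nonterminal (y : S → ℝ) : Prop := y ∈ N.complexes ∧ ¬ N.IsTerminal y

/-- The set of terminal strong linkage classes. -/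
def tslc : Set (Set (S → ℝ)) :=
  {L | ∃ y, N.IsTerminal y ∧ L = {y' | N.reach y y' ∧ N.reach y' y}}

/-- The number `t` of terminal strong linkage classes. -/
noncomputable def numTSLC : ℕ := Nat.card N.tslc

/-- Undirected connectivity (for linkage classes). -/
def linked : (S → ℝ) → (S → ℝ) → Prop :=
  Relation.ReflTransGen (fun a b => (a, b) ∈ N.reactions ∨ (b, a) ∈ N.reactions)

/-- The set of linkage classes (connected components of the reaction digraph). -/
def linkageClasses : Set (Set (S → ℝ)) :=
  {L | ∃ y ∈ N.complexes, L = {y' | y' ∈ N.complexes ∧ N.linked y y'}}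

/-- The number `ℓ` of linkage classes. -/
noncomputable def numLinkageClasses : ℕ := Nat.card N.linkageClasses

/-- The stoichiometric subspace `S = span{y' - y : y → y'}`. -/
def stoichSubspace : Submodule ℝ (S → ℝ) :=
  Submodule.span ℝ {v | ∃ r ∈ N.reactions, v = r.2 - r.1}

/-- The rank `s` of the network. -/
noncomputable def rank : ℕ := Module.finrank ℝ N.stoichSubspace

/-- The deficiency `δ = n - ℓ - s`. -/
noncomputable def deficiency : ℤ :=
  (N.complexes.card : ℤ) - N.numLinkageClasses - N.rank

/-- The map of complexes `Y : ℝ^C → ℝ^S`, sending `ω_y ↦ y`. -/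
noncomputable def mapY : (↥N.complexes → ℝ) →ₗ[ℝ] (S → ℝ) :=
  ∑ y : ↥N.complexes, (LinearMap.proj y).smulRight (y : S → ℝ)

/-- The incidence map `I_a : ℝ^R → ℝ^C`, sending `ω_{y→y'} ↦ ω_{y'} - ω_y`. -/
noncomputable def incidence : (↥N.reactions → ℝ) →ₗ[ℝ] (↥N.complexes → ℝ) :=
  ∑ r : ↥N.reactions,
    (LinearMap.proj r).smulRight
      (Pi.single (⟨r.1.2, N.mem_target r.1 r.2⟩ : ↥N.complexes) 1
        - Pi.single (⟨r.1.1, N.mem_source r.1 r.2⟩ : ↥N.complexes) 1)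

/-- The Laplacian map `A_k x = Σ_{y→y'} k_{y→y'} x_y (ω_{y'} - ω_y)`. -/
noncomputable def laplacian (k : ↥N.reactions → ℝ) :
    (↥N.complexes → ℝ) →ₗ[ℝ] (↥N.complexes → ℝ) :=
  ∑ r : ↥N.reactions, k r •
    ((LinearMap.proj (⟨r.1.1, N.mem_source r.1 r.2⟩ : ↥N.complexes)).smulRight
      (Pi.single (⟨r.1.2, N.mem_target r.1 r.2⟩ : ↥N.complexes) 1
        - Pi.single (⟨r.1.1, N.mem_source r.1 r.2⟩ : ↥N.complexes) 1))

/-- A positive equilibrium of the PL-RDK system with rate constants `k` and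
kinetic-order assignment (T-matrix) `T`. -/
def IsPosEquilibrium (k : ↥N.reactions → ℝ) (T : (S → ℝ) → (S → ℝ)) (c : S → ℝ) : Prop :=
  (∀ i, 0 < c i) ∧
    ∑ r : ↥N.reactions, (k r * ∏ i, (c i) ^ (T r.1.1 i)) • ((r.1.2 : S → ℝ) - r.1.1) = 0

/-- The set of reactant complexes. -/
def reactantSet : Set (S → ℝ) := {y | ∃ y', (y, y') ∈ N.reactions}

/-- The reactant subspace `R = Im Y_res`. -/
def reactantSubspace : Submodule ℝ (S → ℝ) := Submodule.span ℝ N.reactantSet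

/-- The reactant deficiency `δ_ρ = n_r - q`. -/
noncomputable def reactantDeficiency : ℤ :=
  (Nat.card N.reactantSet : ℤ) - Module.finrank ℝ N.reactantSubspace

end CRN

/-!
For `A_k x = 0` and any set `U` of complexes, summing the coordinates of `A_k x` over `U` gives
Kirchhoff's law: the flux `∑ k_r x_{source r}` of the reactions leaving `U` equals that of the
reactions entering `U`. For `U = {x > 0}` the outgoing flux is positive term by term and the
incoming one nonpositive, so both vanish: positivity propagates along reactions and `x⁺` is again
in the kernel. For `x ≥ 0` and `U` the set of complexes reaching `y`, nothing enters `U`, so nothing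
leaves it from a complex where `x > 0`; applied to `x⁺` and `(-x)⁺`, this shows that every kernel
vector is supported on terminal complexes.
On a terminal class `L` the Laplacian preserves the vectors supported on `L` and has zero column
sums, so it is singular there; the positive part of a kernel vector supported on `L` is positive on
all of the strongly connected `L`, which gives one basis vector per class, unique up to scaling.
-/

theorem linearIndependent_of_apply_ne_zero_iff {ι α K : Type*} [Field K] {b : ι → α → K}
    (z : ι → α) (h : ∀ i j, b i (z j) ≠ 0 ↔ i = j) : LinearIndependent K b := by
  refine linearIndependent_iff'.mpr fun s g hg i hi => ?_
  have hgi : ∑ j ∈ s, g j * b j (z i) = 0 := by simpa using congrFun hg (z i)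
  rw [Finset.sum_eq_single_of_mem i hi fun j _ hji => by simp [not_not.mp (mt (h j i).mp hji)]]
    at hgi
  exact (mul_eq_zero.mp hgi).resolve_right ((h i i).mpr rfl)

namespace CRN

variable {S : Type*} [Fintype S] {N : CRN S} {k : N.reactions → ℝ} {x : N.complexes → ℝ}

def source (r : N.reactions) : N.complexes := ⟨r.1.1, N.mem_source r.1 r.2⟩

def target (r : N.reactions) : N.complexes := ⟨r.1.2, N.mem_target r.1 r.2⟩

lemma step_source_target (r : N.reactions) : N.step (source r) (target r) := r.2

lemma laplacian_apply (k : N.reactions → ℝ) (x : N.complexes → ℝ) (z : N.complexes) :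
    N.laplacian k x z = ∑ r, k r * x (source r) *
      ((if z = target r then 1 else 0) - (if z = source r then 1 else 0)) := by
  simp only [laplacian, LinearMap.sum_apply, Finset.sum_apply, LinearMap.smul_apply,
    LinearMap.smulRight_apply, LinearMap.proj_apply, Pi.smul_apply, Pi.sub_apply, Pi.single_apply,
    smul_eq_mul, mul_assoc]
  rfl

lemma sum_filter_laplacian (k : N.reactions → ℝ) (x : N.complexes → ℝ)
    (p : N.complexes → Prop) [DecidablePred p] :
    ∑ z with p z, N.laplacian k x z =
      ∑ r with ¬p (source r) ∧ p (target r), k r * x (source r) -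
        ∑ r with p (source r) ∧ ¬p (target r), k r * x (source r) := by
  simp_rw [laplacian_apply, Finset.sum_comm (s := Finset.univ.filter p), ← Finset.mul_sum,
    Finset.sum_sub_distrib, Finset.sum_ite_eq', Finset.mem_filter, Finset.sum_filter,
    ← Finset.sum_sub_distrib]
  refine Finset.sum_congr rfl fun r _ => ?_
  by_cases hs : p (source r) <;> by_cases ht : p (target r) <;> simp [hs, ht]

lemma sum_laplacian (k : N.reactions → ℝ) (x : N.complexes → ℝ) :
    ∑ z, N.laplacian k x z = 0 := by
  simpa using sum_filter_laplacian k x fun _ => True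

lemma inflow_eq_outflow (hx : N.laplacian k x = 0) (p : N.complexes → Prop) [DecidablePred p] :
    ∑ r with ¬p (source r) ∧ p (target r), k r * x (source r) =
      ∑ r with p (source r) ∧ ¬p (target r), k r * x (source r) := by
  rw [← sub_eq_zero, ← sum_filter_laplacian, hx]
  exact Finset.sum_const_zero

lemma source_eq_zero_of_crossing (hk : ∀ r, 0 < k r) (hx : N.laplacian k x = 0)
    (p : N.complexes → Prop) [DecidablePred p]
    (hin : ∀ r, ¬p (source r) → p (target r) → x (source r) ≤ 0)
    (hout : ∀ r, p (source r) → ¬p (target r) → 0 ≤ x (source r))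
    (r : N.reactions) (hr : ¬(p (source r) ↔ p (target r))) : x (source r) = 0 := by
  have hin' : ∀ r ∈ Finset.univ.filter (fun r => ¬p (source r) ∧ p (target r)),
      k r * x (source r) ≤ 0 := fun r hr =>
    have hr := (Finset.mem_filter.mp hr).2
    mul_nonpos_of_nonneg_of_nonpos (hk r).le (hin r hr.1 hr.2)
  have hout' : ∀ r ∈ Finset.univ.filter (fun r => p (source r) ∧ ¬p (target r)),
      0 ≤ k r * x (source r) := fun r hr =>
    have hr := (Finset.mem_filter.mp hr).2
    mul_nonneg (hk r).le (hout r hr.1 hr.2)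
  have hbal := inflow_eq_outflow hx p
  have hzero : ∑ r with p (source r) ∧ ¬p (target r), k r * x (source r) = 0 :=
    le_antisymm (hbal ▸ Finset.sum_nonpos hin') (Finset.sum_nonneg hout')
  rw [hzero] at hbal
  have hkr : k r * x (source r) = 0 := by
    by_cases hs : p (source r)
    · exact (Finset.sum_eq_zero_iff_of_nonneg hout').mp hzero r (by simp; tauto)
    · exact (Finset.sum_eq_zero_iff_of_nonpos hin').mp hbal r (by simp; tauto)
  exact (mul_eq_zero.mp hkr).resolve_left (hk r).ne'

lemma laplacian_indicator_eq_zero (hx : N.laplacian k x = 0) (p : N.complexes → Prop)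
    (hfwd : ∀ r, p (source r) → p (target r))
    (hin : ∀ r, ¬p (source r) → p (target r) → x (source r) = 0) :
    N.laplacian k ({z | p z}.indicator x) = 0 := by
  funext z
  by_cases hz : p z
  · rw [← congrFun hx z, laplacian_apply, laplacian_apply]
    refine Finset.sum_congr rfl fun r _ => ?_
    by_cases hs : p (source r)
    · simp [hs]
    · have : z ≠ source r := fun h => hs (h ▸ hz)
      by_cases ht : z = target r
      · simp [hs, hin r hs (ht ▸ hz)]
      · simp [hs, ht, this]
  · rw [laplacian_apply]
    refine Finset.sum_eq_zero fun r _ => ?_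
    by_cases hs : p (source r)
    · have h1 : z ≠ target r := fun h => hz (h ▸ hfwd r hs)
      have h2 : z ≠ source r := fun h => hz (h ▸ hs)
      simp [h1, h2]
    · simp [hs]

lemma source_eq_zero_of_crossing_pos (hk : ∀ r, 0 < k r) (hx : N.laplacian k x = 0)
    (r : N.reactions) (hr : ¬(0 < x (source r) ↔ 0 < x (target r))) : x (source r) = 0 :=
  source_eq_zero_of_crossing hk hx (0 < x ·) (fun _ h _ => not_lt.mp h) (fun _ h _ => h.le) r hr

lemma target_pos_of_source_pos (hk : ∀ r, 0 < k r) (hx : N.laplacian k x = 0)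
    {r : N.reactions} (hs : 0 < x (source r)) : 0 < x (target r) :=
  by_contra fun ht => hs.ne' (source_eq_zero_of_crossing_pos hk hx r (by tauto))

lemma laplacian_posPart (hk : ∀ r, 0 < k r) (hx : N.laplacian k x = 0) :
    N.laplacian k x⁺ = 0 := by
  have hx' : x⁺ = {z | 0 < x z}.indicator x := by
    funext z
    by_cases hz : 0 < x z
    · simp [hz, hz.le]
    · simp [hz, not_lt.mp hz]
  rw [hx']
  exact laplacian_indicator_eq_zero hx _ (fun _ => target_pos_of_source_pos hk hx)
    fun r hs ht => source_eq_zero_of_crossing_pos hk hx r (by tauto)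

lemma exists_nonneg_of_ne_zero (hk : ∀ r, 0 < k r) (hx : N.laplacian k x = 0)
    {w : N.complexes} (hw : x w ≠ 0) :
    ∃ c, N.laplacian k c = 0 ∧ 0 ≤ c ∧ 0 < c w ∧ ∀ z, x z = 0 → c z = 0 := by
  obtain ⟨y, hy, hyw, hyz⟩ :
      ∃ y, N.laplacian k y = 0 ∧ 0 < y w ∧ ∀ z, x z = 0 → y z = 0 := by
    rcases hw.lt_or_gt with hneg | hpos
    · exact ⟨-x, by simp [hx], by simpa using hneg, by simp⟩
    · exact ⟨x, hx, hpos, fun _ => id⟩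
  refine ⟨y⁺, laplacian_posPart hk hy, posPart_nonneg y, ?_, fun z hz => ?_⟩
  · simpa [posPart_def] using hyw
  · simp [hyz z hz]

lemma mem_complexes_of_reach {a b : S → ℝ} (ha : a ∈ N.complexes) (h : N.reach a b) :
    b ∈ N.complexes := by
  induction h with
  | refl => exact ha
  | tail _ hstep _ => exact N.mem_target _ hstep

lemma mem_of_reach {P : Set N.complexes} (hP : ∀ r, source r ∈ P → target r ∈ P)
    {a b : N.complexes} (h : N.reach a b) (ha : a ∈ P) : b ∈ P := by
  suffices ∀ c, N.reach a c → ∀ hc : c ∈ N.complexes, ⟨c, hc⟩ ∈ P from this b h b.2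
  intro c hc
  induction hc with
  | refl => exact fun _ => ha
  | tail _ hstep ih => exact fun _ => hP ⟨_, hstep⟩ (ih (N.mem_source _ hstep))

lemma pos_of_reach (hk : ∀ r, 0 < k r) (hx : N.laplacian k x = 0) {a b : N.complexes}
    (h : N.reach a b) (ha : 0 < x a) : 0 < x b :=
  mem_of_reach (P := {z | 0 < x z}) (fun _ => target_pos_of_source_pos hk hx) h ha

lemma isTerminal_of_nonneg (hk : ∀ r, 0 < k r) (hx : N.laplacian k x = 0) (hnn : 0 ≤ x)
    {y : N.complexes} (hy : 0 < x y) : N.IsTerminal y := by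
  have hleave := source_eq_zero_of_crossing hk hx (N.reach · y)
    (fun r hs ht => absurd (.head (step_source_target r) ht) hs) (fun r _ _ => hnn _)
  refine ⟨y.2, fun b hb => ?_⟩
  let P : Set N.complexes := {z | N.reach z y ∧ 0 < x z}
  have hP : ∀ r, source r ∈ P → target r ∈ P := fun r ⟨_, hpos⟩ =>
    ⟨by_contra fun ht => hpos.ne' (hleave r (by tauto)), target_pos_of_source_pos hk hx hpos⟩
  exact (mem_of_reach (b := ⟨b, mem_complexes_of_reach y.2 hb⟩) hP hb ⟨.refl, hy⟩).1

lemma isTerminal_of_ne_zero (hk : ∀ r, 0 < k r) (hx : N.laplacian k x = 0)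
    {y : N.complexes} (hy : x y ≠ 0) : N.IsTerminal y := by
  obtain ⟨c, hc, hcnn, hcy, -⟩ := exists_nonneg_of_ne_zero hk hx hy
  exact isTerminal_of_nonneg hk hc hcnn hcy

def strongClass (N : CRN S) (a : S → ℝ) : Set (S → ℝ) := {b | N.reach a b ∧ N.reach b a}

lemma mem_strongClass_self (a : S → ℝ) : a ∈ N.strongClass a := ⟨.refl, .refl⟩

lemma strongClass_mem_tslc {a : S → ℝ} (ha : N.IsTerminal a) : N.strongClass a ∈ N.tslc :=
  ⟨a, ha, rfl⟩

variable {L L' : Set (S → ℝ)} {a b : S → ℝ}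

lemma eq_strongClass_of_mem_tslc (hL : L ∈ N.tslc) (ha : a ∈ L) : L = N.strongClass a := by
  obtain ⟨y, -, rfl⟩ := hL
  obtain ⟨hya, hay⟩ := ha
  ext b
  exact ⟨fun ⟨h₁, h₂⟩ => ⟨hay.trans h₁, h₂.trans hya⟩,
    fun ⟨h₁, h₂⟩ => ⟨hya.trans h₁, h₂.trans hay⟩⟩

lemma eq_of_mem_tslc (hL : L ∈ N.tslc) (hL' : L' ∈ N.tslc) (ha : a ∈ L) (ha' : a ∈ L') :
    L = L' := by
  rw [eq_strongClass_of_mem_tslc hL ha, eq_strongClass_of_mem_tslc hL' ha']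

lemma reach_of_mem_tslc (hL : L ∈ N.tslc) (ha : a ∈ L) (hb : b ∈ L) : N.reach a b := by
  rw [eq_strongClass_of_mem_tslc hL ha] at hb
  exact hb.1

lemma mem_tslc_of_step (hL : L ∈ N.tslc) (ha : a ∈ L) (h : N.step a b) : b ∈ L := by
  obtain ⟨y, hy, rfl⟩ := hL
  have hyb : N.reach y b := ha.1.tail h
  exact ⟨hyb, hy.2 b hyb⟩

lemma exists_mem_tslc (hL : L ∈ N.tslc) : ∃ z : N.complexes, ↑z ∈ L := by
  obtain ⟨y, hy, rfl⟩ := hL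
  exact ⟨⟨y, hy.1⟩, mem_strongClass_self y⟩

instance : Finite N.tslc := by
  refine Set.Finite.subset N.complexes.finite_toSet.finite_subsets fun L hL => ?_
  obtain ⟨y, hy, rfl⟩ := hL
  exact fun b hb => mem_complexes_of_reach hy.1 hb.1

def supported (N : CRN S) (L : Set (S → ℝ)) : Submodule ℝ (N.complexes → ℝ) :=
  Submodule.pi {z | ↑z ∉ L} fun _ => ⊥

lemma mem_supported : x ∈ N.supported L ↔ ∀ z : N.complexes, ↑z ∉ L → x z = 0 := by
  simp [supported, Submodule.mem_pi]

lemma indicator_mem_supported (x : N.complexes → ℝ) (L : Set (S → ℝ)) :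
    {z : N.complexes | ↑z ∈ L}.indicator x ∈ N.supported L :=
  mem_supported.mpr fun _ hz => Set.indicator_of_notMem (s := {z : N.complexes | ↑z ∈ L}) hz x

lemma laplacian_mem_supported (hL : L ∈ N.tslc) (hx : x ∈ N.supported L) :
    N.laplacian k x ∈ N.supported L := by
  rw [mem_supported] at hx ⊢
  intro z hz
  rw [laplacian_apply]
  refine Finset.sum_eq_zero fun r _ => ?_
  by_cases hs : ↑(source r) ∈ L
  · have ht := mem_tslc_of_step hL hs (step_source_target r)
    have h₁ : z ≠ target r := fun h => hz (h ▸ ht)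
    have h₂ : z ≠ source r := fun h => hz (h ▸ hs)
    simp [h₁, h₂]
  · simp [hx _ hs]

lemma laplacian_indicator_tslc (hk : ∀ r, 0 < k r) (hx : N.laplacian k x = 0)
    (hL : L ∈ N.tslc) : N.laplacian k ({z : N.complexes | ↑z ∈ L}.indicator x) = 0 := by
  refine laplacian_indicator_eq_zero hx (fun z => ↑z ∈ L)
    (fun r hs => mem_tslc_of_step hL hs (step_source_target r)) fun r hs ht => ?_
  by_contra hxs
  have hst : N.reach (source r) (target r) := .single (step_source_target r)
  have hts := (isTerminal_of_ne_zero hk hx hxs).2 _ hst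
  exact hs (by rw [eq_strongClass_of_mem_tslc hL ht]; exact ⟨hts, hst⟩)

lemma eq_zero_of_mem_supported (hk : ∀ r, 0 < k r) (hx : N.laplacian k x = 0)
    (hL : L ∈ N.tslc) (hxL : x ∈ N.supported L) {z₀ : N.complexes} (hz₀ : ↑z₀ ∈ L)
    (hx₀ : x z₀ = 0) : x = 0 := by
  by_contra hne
  obtain ⟨w, hw⟩ := Function.ne_iff.mp hne
  obtain ⟨c, hc, -, hcw, hcx⟩ := exists_nonneg_of_ne_zero hk hx hw
  have hwL : ↑w ∈ L := by_contra fun h => hw (mem_supported.mp hxL w h)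
  exact (pos_of_reach hk hc (reach_of_mem_tslc hL hwL hz₀) hcw).ne' (hcx z₀ hx₀)

lemma exists_ne_zero_mem_supported (hL : L ∈ N.tslc) :
    ∃ v ∈ N.supported L, N.laplacian k v = 0 ∧ v ≠ 0 := by
  obtain ⟨z₀, hz₀⟩ := exists_mem_tslc hL
  have hnotSurj : ¬Set.SurjOn (N.laplacian k) (N.supported L) (N.supported L) := fun hsurj => by
    have hz₀L : Pi.single z₀ (1 : ℝ) ∈ N.supported L :=
      mem_supported.mpr fun z hz => Pi.single_eq_of_ne (fun h : z = z₀ => hz (h ▸ hz₀)) _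
    obtain ⟨v, -, hv⟩ := hsurj hz₀L
    simpa [hv] using sum_laplacian k v
  rw [← LinearMap.injOn_iff_surjOn fun _ => laplacian_mem_supported hL] at hnotSurj
  obtain ⟨u, hu, v, hv, huv, hne⟩ : ∃ u ∈ N.supported L, ∃ v ∈ N.supported L,
      N.laplacian k u = N.laplacian k v ∧ u ≠ v := by
    simpa [Set.InjOn] using hnotSurj
  exact ⟨u - v, sub_mem hu hv, by simp [huv], sub_ne_zero.mpr hne⟩

lemma exists_laplacian_eq_zero_support_eq (hk : ∀ r, 0 < k r) (hL : L ∈ N.tslc) :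
    ∃ b, N.laplacian k b = 0 ∧ ∀ z : N.complexes, b z ≠ 0 ↔ ↑z ∈ L := by
  obtain ⟨v, hvL, hv, hne⟩ := exists_ne_zero_mem_supported (k := k) hL
  obtain ⟨w, hw⟩ := Function.ne_iff.mp hne
  obtain ⟨c, hc, -, hcw, hcv⟩ := exists_nonneg_of_ne_zero hk hv hw
  have hwL : ↑w ∈ L := by_contra fun h => hw (mem_supported.mp hvL w h)
  refine ⟨c, hc, fun z => ⟨fun hcz => by_contra fun hz => hcz (hcv z ?_), fun hz => ?_⟩⟩
  · exact mem_supported.mp hvL z hz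
  · exact (pos_of_reach hk hc (reach_of_mem_tslc hL hwL hz) hcw).ne'

lemma eq_smul_of_mem_supported (hk : ∀ r, 0 < k r) (hx : N.laplacian k x = 0)
    (hL : L ∈ N.tslc) (hxL : x ∈ N.supported L) {b : N.complexes → ℝ}
    (hb : N.laplacian k b = 0) (hbL : ∀ z : N.complexes, b z ≠ 0 ↔ ↑z ∈ L)
    {z₀ : N.complexes} (hz₀ : ↑z₀ ∈ L) : x = (x z₀ / b z₀) • b := by
  have hbL' : b ∈ N.supported L := mem_supported.mpr fun z hz => not_not.mp (mt (hbL z).mp hz)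
  have hb₀ : b z₀ ≠ 0 := (hbL z₀).mpr hz₀
  refine sub_eq_zero.mp (eq_zero_of_mem_supported hk ?_ hL
    (sub_mem hxL (Submodule.smul_mem _ _ hbL')) hz₀ ?_)
  · simp [hx, hb]
  · simp [hb₀]

lemma sum_indicator_tslc [Fintype N.tslc] (hk : ∀ r, 0 < k r) (hx : N.laplacian k x = 0) :
    ∑ L : N.tslc, {z : N.complexes | ↑z ∈ (L : Set (S → ℝ))}.indicator x = x := by
  funext z
  rw [Finset.sum_apply]
  by_cases hxz : x z = 0
  · simp [Set.indicator_apply, hxz]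
  have hL := strongClass_mem_tslc (isTerminal_of_ne_zero hk hx hxz)
  rw [Finset.sum_eq_single_of_mem ⟨_, hL⟩ (Finset.mem_univ _) fun L _ hne => ?_]
  · exact Set.indicator_of_mem (s := {w : N.complexes | ↑w ∈ N.strongClass ↑z})
      (mem_strongClass_self (z : S → ℝ)) x
  · refine Set.indicator_of_notMem (s := {z : N.complexes | ↑z ∈ (L : Set (S → ℝ))})
      (fun hz => hne (Subtype.ext ?_)) x
    exact eq_of_mem_tslc L.2 hL hz (mem_strongClass_self _)

end CRN

/-- **Structure Theorem of the Laplacian Kernel (STLK).**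
For every positive rate vector `k`, `Ker A_k` has a basis `b^1, …, b^t` indexed by
the terminal strong linkage classes, with `supp b^i` equal to the i-th terminal
strong linkage class.  In particular `dim Ker A_k = t` and every element of
`Ker A_k` is supported on terminal complexes. -/
theorem stlk {S : Type*} [Fintype S] (N : CRN S)
    (k : ↥N.reactions → ℝ) (hk : ∀ r, 0 < k r) :
    ∃ b : ↥N.tslc → (↥N.complexes → ℝ),
      LinearIndependent ℝ b ∧
      Submodule.span ℝ (Set.range b) = LinearMap.ker (N.laplacian k) ∧
      (∀ L : ↥N.tslc, ∀ y : ↥N.complexes,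
        b L y ≠ 0 ↔ (y : S → ℝ) ∈ (L : Set (S → ℝ))) ∧
      Module.finrank ℝ ↥(LinearMap.ker (N.laplacian k)) = N.numTSLC ∧
      (∀ x ∈ LinearMap.ker (N.laplacian k),
        ∀ y : ↥N.complexes, x y ≠ 0 → N.IsTerminal (y : S → ℝ)) := by
  have := Fintype.ofFinite N.tslc
  choose b hb hbL using fun L : N.tslc => CRN.exists_laplacian_eq_zero_support_eq hk L.2
  choose z hz using fun L : N.tslc => CRN.exists_mem_tslc L.2
  have hli : LinearIndependent ℝ b := linearIndependent_of_apply_ne_zero_iff z fun L L' => by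
    rw [hbL]
    exact ⟨fun h => Subtype.ext (CRN.eq_of_mem_tslc L.2 L'.2 h (hz L')), fun h => h ▸ hz L'⟩
  have hspan : Submodule.span ℝ (Set.range b) = LinearMap.ker (N.laplacian k) := by
    refine le_antisymm (Submodule.span_le.mpr (Set.range_subset_iff.mpr hb)) fun x hx => ?_
    rw [← CRN.sum_indicator_tslc hk hx]
    refine Submodule.sum_mem _ fun L _ => ?_
    rw [CRN.eq_smul_of_mem_supported hk (CRN.laplacian_indicator_tslc hk hx L.2) L.2
      (CRN.indicator_mem_supported x L) (hb L) (hbL L) (hz L)]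
    exact Submodule.smul_mem _ _ (Submodule.subset_span ⟨L, rfl⟩)
  refine ⟨b, hli, hspan, hbL, ?_, fun x hx y hy => CRN.isTerminal_of_ne_zero hk hx hy⟩
  rw [← hspan, finrank_span_eq_card hli, CRN.numTSLC, Nat.card_eq_fintype_card]
end

section
/- Consider the GMA system approximation of the pre-industrial carbon cycle: Ȧ₁ = k₁ A₁^{p₁} A₂^{q₁} − k₂ A₁^{p₂} A₂^{q₂}, Ȧ₂ = k₂ A₁^{p₂} A₂^{q₂} − k₁ A₁^{p₁} A₂^{q₁} − a_m A₂ + a_m β A₃, Ȧ₃ = a_m A₂ − a_m β A₃, with k₁, k₂, a_m, β > 0 and real exponents satisfying p₁ = p₂ and q₁ ≠ q₂. Then every positive steady state (A₁, A₂, A₃) ∈ ℝ³_{>0} satisfies A₂ = (k₂/k₁)^{1/(q₁ − q₂)} and A₃ = (1/β)(k₂/k₁)^{1/(q₁ − q₂)}. In particular, the system has absolute concentration robustness in A₂ (and in A₃). -/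
/-- For the GMA approximation of the pre-industrial carbon cycle
`Ȧ₁ = k₁ A₁^p₁ A₂^q₁ − k₂ A₁^p₂ A₂^q₂`,
`Ȧ₂ = k₂ A₁^p₂ A₂^q₂ − k₁ A₁^p₁ A₂^q₁ − a_m A₂ + a_m β A₃`,
`Ȧ₃ = a_m A₂ − a_m β A₃`,
with `k₁, k₂, a_m, β > 0`, `p₁ = p₂` and `q₁ ≠ q₂`: every positive steady state
satisfies `A₂ = (k₂/k₁)^(1/(q₁−q₂))` and `A₃ = (1/β)(k₂/k₁)^(1/(q₁−q₂))`;
in particular the system has absolute concentration robustness in `A₂` and `A₃`. -/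
theorem acr_carbon_cycle (k₁ k₂ am β p₁ p₂ q₁ q₂ : ℝ)
    (hk₁ : 0 < k₁) (hk₂ : 0 < k₂) (ham : 0 < am) (hβ : 0 < β)
    (hp : p₁ = p₂) (hq : q₁ ≠ q₂) :
    ∀ A₁ A₂ A₃ : ℝ, 0 < A₁ → 0 < A₂ → 0 < A₃ →
      k₁ * A₁ ^ p₁ * A₂ ^ q₁ - k₂ * A₁ ^ p₂ * A₂ ^ q₂ = 0 →
      k₂ * A₁ ^ p₂ * A₂ ^ q₂ - k₁ * A₁ ^ p₁ * A₂ ^ q₁ - am * A₂ + am * β * A₃ = 0 →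
      am * A₂ - am * β * A₃ = 0 →
      A₂ = (k₂ / k₁) ^ ((1 : ℝ) / (q₁ - q₂)) ∧
      A₃ = (1 / β) * (k₂ / k₁) ^ ((1 : ℝ) / (q₁ - q₂)) := by
  intro A₁ A₂ A₃ hA₁ hA₂ hA₃ e1 e2 e3
  subst hp
  have h1 : k₁ * A₂ ^ q₁ = k₂ * A₂ ^ q₂ := by
    have hA1p : (0:ℝ) < A₁ ^ p₁ := Real.rpow_pos_of_pos hA₁ _
    have h : k₁ * A₂ ^ q₁ * A₁ ^ p₁ = k₂ * A₂ ^ q₂ * A₁ ^ p₁ := by linarith [e1]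
    exact mul_right_cancel₀ hA1p.ne' h
  have hq2 : (0:ℝ) < A₂ ^ q₂ := Real.rpow_pos_of_pos hA₂ _
  have h2 : A₂ ^ (q₁ - q₂) = k₂ / k₁ := by
    rw [Real.rpow_sub hA₂]
    field_simp
    nlinarith [h1]
  have hsub : q₁ - q₂ ≠ 0 := sub_ne_zero.mpr hq
  have hA2 : A₂ = (k₂ / k₁) ^ ((1 : ℝ) / (q₁ - q₂)) := by
    rw [← h2, ← Real.rpow_mul hA₂.le, mul_one_div, div_self hsub, Real.rpow_one]
  refine ⟨hA2, ?_⟩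
  have : A₃ = A₂ / β := by
    field_simp
    nlinarith [e3]
  rw [this, hA2]; ring
end

section
/- Consider the GMA system Ȧ₁ = k₁ A₁^{p₁} A₂^{q₁} − k₂ A₁^{p₂} A₂^{q₂}, Ȧ₂ = k₂ A₁^{p₂} A₂^{q₂} − k₁ A₁^{p₁} A₂^{q₁} − a_m A₂ + a_m β A₃, Ȧ₃ = a_m A₂ − a_m β A₃, with k₁, k₂, a_m, β > 0, p₁ = p₂, q₁ ≠ q₂, and let A₀ > 0 denote the conserved total carbon. A point (A₁, A₂, A₃) ∈ ℝ³_{>0} with A₁ + A₂ + A₃ = A₀ is a positive steady state if and only if A₂ = (k₂/k₁)^{1/(q₁ − q₂)}, A₃ = (1/β)(k₂/k₁)^{1/(q₁ − q₂)}, and A₁ = A₀ − (1 + 1/β)(k₂/k₁)^{1/(q₁ − q₂)} (which is positive precisely when A₀ > (1 + 1/β)(k₂/k₁)^{1/(q₁ − q₂)}). -/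
/-- For the GMA system
`Ȧ₁ = k₁ A₁^p₁ A₂^q₁ − k₂ A₁^p₂ A₂^q₂`,
`Ȧ₂ = k₂ A₁^p₂ A₂^q₂ − k₁ A₁^p₁ A₂^q₁ − a_m A₂ + a_m β A₃`,
`Ȧ₃ = a_m A₂ − a_m β A₃`,
with `k₁, k₂, a_m, β > 0`, `p₁ = p₂`, `q₁ ≠ q₂`, and conserved total carbon
`A₀ > 0`: a positive point with `A₁ + A₂ + A₃ = A₀` is a steady state iff
`A₂ = (k₂/k₁)^(1/(q₁−q₂))`, `A₃ = (1/β)(k₂/k₁)^(1/(q₁−q₂))` and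
`A₁ = A₀ − (1 + 1/β)(k₂/k₁)^(1/(q₁−q₂))` (which is positive precisely when
`A₀ > (1 + 1/β)(k₂/k₁)^(1/(q₁−q₂))`). -/
theorem carbon_cycle_equilibria_set (k₁ k₂ am β p₁ p₂ q₁ q₂ A₀ : ℝ)
    (hk₁ : 0 < k₁) (hk₂ : 0 < k₂) (ham : 0 < am) (hβ : 0 < β)
    (hp : p₁ = p₂) (hq : q₁ ≠ q₂) (hA₀ : 0 < A₀) :
    (∀ A₁ A₂ A₃ : ℝ, 0 < A₁ → 0 < A₂ → 0 < A₃ → A₁ + A₂ + A₃ = A₀ →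
      ((k₁ * A₁ ^ p₁ * A₂ ^ q₁ - k₂ * A₁ ^ p₂ * A₂ ^ q₂ = 0 ∧
        k₂ * A₁ ^ p₂ * A₂ ^ q₂ - k₁ * A₁ ^ p₁ * A₂ ^ q₁ - am * A₂ + am * β * A₃ = 0 ∧
        am * A₂ - am * β * A₃ = 0) ↔
       (A₂ = (k₂ / k₁) ^ ((1 : ℝ) / (q₁ - q₂)) ∧
        A₃ = (1 / β) * (k₂ / k₁) ^ ((1 : ℝ) / (q₁ - q₂)) ∧
        A₁ = A₀ - (1 + 1 / β) * (k₂ / k₁) ^ ((1 : ℝ) / (q₁ - q₂))))) ∧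
    (0 < A₀ - (1 + 1 / β) * (k₂ / k₁) ^ ((1 : ℝ) / (q₁ - q₂)) ↔
      (1 + 1 / β) * (k₂ / k₁) ^ ((1 : ℝ) / (q₁ - q₂)) < A₀) := by
  have hq' : q₁ - q₂ ≠ 0 := sub_ne_zero.mpr hq
  set c := (k₂ / k₁) ^ ((1 : ℝ) / (q₁ - q₂)) with hc
  have hcpos : 0 < c := Real.rpow_pos_of_pos (div_pos hk₂ hk₁) _
  have hck : c ^ (q₁ - q₂) = k₂ / k₁ := by
    rw [hc, ← Real.rpow_mul (div_pos hk₂ hk₁).le, one_div,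
      inv_mul_cancel₀ hq', Real.rpow_one]
  constructor
  · intro A₁ A₂ A₃ h1 h2 h3 hsum
    have hA1p : 0 < A₁ ^ p₂ := Real.rpow_pos_of_pos h1 _
    constructor
    · rintro ⟨e1, e2, e3⟩
      rw [hp] at e1
      have h3' : A₃ = (1 / β) * A₂ := by
        field_simp
        nlinarith [e3]
      have hkey : k₁ * A₂ ^ q₁ = k₂ * A₂ ^ q₂ :=
        mul_left_cancel₀ hA1p.ne'
          (show A₁ ^ p₂ * (k₁ * A₂ ^ q₁) = A₁ ^ p₂ * (k₂ * A₂ ^ q₂) by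
            linear_combination e1)
      have hrw : A₂ ^ (q₁ - q₂) = k₂ / k₁ := by
        rw [Real.rpow_sub h2, div_eq_div_iff (Real.rpow_pos_of_pos h2 q₂).ne' hk₁.ne']
        linarith [hkey]
      have hA2 : A₂ = c := by
        have : A₂ = (A₂ ^ (q₁ - q₂)) ^ ((1 : ℝ) / (q₁ - q₂)) := by
          rw [← Real.rpow_mul h2.le, mul_one_div, div_self hq', Real.rpow_one]
        rw [this, hrw, hc]
      refine ⟨hA2, by rw [h3', hA2], ?_⟩
      have : A₂ + A₃ = (1 + 1 / β) * c := by
        rw [h3', hA2]; ring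
      linarith
    · rintro ⟨hA2, hA3, hA1⟩
      have e1 : k₁ * A₁ ^ p₁ * A₂ ^ q₁ - k₂ * A₁ ^ p₂ * A₂ ^ q₂ = 0 := by
        rw [hp, hA2]
        have : c ^ q₁ = c ^ q₂ * (k₂ / k₁) := by
          rw [← hck, ← Real.rpow_add hcpos]; ring_nf
        rw [this]
        field_simp
        ring
      have e3 : am * A₂ - am * β * A₃ = 0 := by
        rw [hA2, hA3]
        field_simp
        ring
      exact ⟨e1, by linarith, e3⟩
  · constructor <;> intro h <;> linarith
end
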